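/- For all pairs w ≤ y in W^J there exist unique elements Q^{J,a}_{w,y} ∈ R such that for all w, z ∈ W^J with w ≤ z one has Σ_{y ∈ W^J, w ≤ y ≤ z} (−1)^{ℓ(y)−ℓ(w)} Q^{J,a}_{w,y} P^{J,a}_{y,z} = δ_{w,z}. Moreover each Q^{J,a}_{w,y} lies in ℤ[q], Q^{J,a}_{w,w} = 1, and deg Q^{J,a}_{w,y} ≤ (ℓ(y)−ℓ(w)−1)/2 whenever w < y. -/

import Mathlib

/-!
The defining relations of `Q` form a triangular system: `P_{z,z} = 1`, and `P_{y,z} ≠ 0` forces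
`y ≤ z`, so `Q_{w,z}` is determined by recursion on `ℓ(z)`. Since `(m-1)/2 + (n-1)/2 ≤ (m+n-1)/2`,
the recursion preserves "polynomial in `q` of degree `≤ (ℓ(z)-ℓ(w)-1)/2`" as soon as every
`P_{y,z}` has this shape.

For `P`: in `H^{J,a}` the bar involution is unitriangular with Laurent entries, because
`T_{y⁻¹}⁻¹ = q^{-ℓ(y)} T_y + (lower terms)` in `H` and `T_x ↦ a^m T_u` in `H^{J,a}`. Comparing
coefficients in `bar C_w = q^{-ℓ(w)} C_w` and inducting on `ℓ(w) - ℓ(x) = n` shows that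
`P_{x,w} - q^n conj(P_{x,w})` is a Laurent polynomial in `q`. As `P_{x,w}` lives in degrees
`0, …, n-1` and `q^n conj(P_{x,w})` in degrees `n+1, …, 2n`, `P_{x,w}` is the part of that Laurent
polynomial in degrees `< n`.
-/

namespace KLPaper

open Polynomial
open scoped Classical

variable {B : Type*} {W : Type*} [Group W] {M : CoxeterMatrix B}

/-- The Bruhat order on a Coxeter group: generated by right multiplication by
reflections which increases the length. -/
def bruhatLE (cs : CoxeterSystem M W) : W → W → Prop :=
  Relation.ReflTransGen (fun x y =>
    (∃ t, cs.IsReflection t ∧ y = x * t) ∧ cs.length x < cs.length y)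

/-- A commutative ring `R` containing `ℤ[q,q⁻¹]`, with a direct sum decomposition
`R = ⊕_{k ∈ ℤ} R_k` into additive subgroups and an involutive ring endomorphism `conj`
such that `R_i R_j ⊆ R_{i+j}`, `conj R_i = R_{-i}`, `1 ∈ R_0`, `q ∈ R_2`, `conj q = q⁻¹`. -/
structure KLRing (R : Type*) [CommRing R] where
  q : R
  qinv : R
  q_qinv : q * qinv = 1
  grade : ℤ → AddSubgroup R
  decomp : DirectSum.IsInternal grade
  conj : R →+* R
  conj_conj : ∀ r : R, conj (conj r) = r
  grade_mul : ∀ (i j : ℤ) (r s : R), r ∈ grade i → s ∈ grade j → r * s ∈ grade (i + j)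
  conj_grade : ∀ (i : ℤ) (r : R), r ∈ grade i → conj r ∈ grade (-i)
  one_mem : (1 : R) ∈ grade 0
  q_mem : q ∈ grade 2
  conj_q : conj q = qinv
  laurent_inj : Function.Injective fun f : ℤ →₀ ℤ =>
    f.sum fun k c => c • (if 0 ≤ k then q ^ k.toNat else qinv ^ (-k).toNat)

variable {R : Type*} [CommRing R]

/-- The subgroup `R_0 + R_1 + ⋯ + R_{n-1} = ⊕_{i=0}^{n-1} R_i` of `R`. -/
def KLRing.gradeSum (K : KLRing R) (n : ℕ) : AddSubgroup R :=
  ⨆ i ∈ Finset.range n, K.grade (i : ℤ)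

/-- `r` belongs to `ℤ[q] ⊆ R`. -/
def KLRing.InZq (K : KLRing R) (r : R) : Prop :=
  ∃ p : Polynomial ℤ, Polynomial.aeval K.q p = r

/-- The Hecke algebra of `(W, S)` over `R`: the free `R`-module with basis
`{T_w}_{w ∈ W}`, with multiplication determined by `T_{w₁} T_{w₂} = T_{w₁ w₂}`
whenever `ℓ(w₁w₂) = ℓ(w₁) + ℓ(w₂)` and `(T_s + 1)(T_s - q) = 0` for `s ∈ S`. -/
structure Hecke (cs : CoxeterSystem M W) (R : Type*) [CommRing R] (q : R) where
  carrier : Type*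
  [ring : Ring carrier]
  [alg : Algebra R carrier]
  T : W → carrier
  basis : Module.Basis W R carrier
  basis_eq : ∀ w : W, basis w = T w
  T_mul : ∀ w₁ w₂ : W, cs.length (w₁ * w₂) = cs.length w₁ + cs.length w₂ →
    T w₁ * T w₂ = T (w₁ * w₂)
  T_quad : ∀ i : B, (T (cs.simple i) + 1) * (T (cs.simple i) - algebraMap R carrier q) = 0

attribute [instance] Hecke.ring Hecke.alg

variable {cs : CoxeterSystem M W}

/-- `bar` is the bar involution `Σ r_w T_w ↦ Σ conj(r_w) (T_{w⁻¹})⁻¹` of the Hecke algebra. -/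
def IsBar (K : KLRing R) (Hk : Hecke cs R K.q) (bar : Hk.carrier →+* Hk.carrier) : Prop :=
  ∀ (r : R) (w : W), bar (r • Hk.T w) = K.conj r • Ring.inverse (Hk.T w⁻¹)

/-- `j` is the involution `j(Σ r_w T_w) = Σ r_w (-q)^{ℓ(w)} (T_{w⁻¹})⁻¹` of the Hecke algebra. -/
def IsJ (K : KLRing R) (Hk : Hecke cs R K.q) (j : Hk.carrier →ₐ[R] Hk.carrier) : Prop :=
  ∀ w : W, j (Hk.T w) = (-K.q) ^ cs.length w • Ring.inverse (Hk.T w⁻¹)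

/-- `C` is the Kazhdan–Lusztig basis element `C_w`:
`C = Σ_{y ≤ w} P_{y,w} T_y` with `P_{w,w} = 1`,
`P_{y,w} ∈ ⊕_{i=0}^{ℓ(w)-ℓ(y)-1} R_i` for `y < w`, and `bar C = q^{-ℓ(w)} C`.
(The coefficient `P_{y,w}` of `C_w` is `Hk.basis.repr C y`.) -/
def IsKLElt (K : KLRing R) (Hk : Hecke cs R K.q)
    (bar : Hk.carrier →+* Hk.carrier) (w : W) (C : Hk.carrier) : Prop :=
  Hk.basis.repr C w = 1 ∧
  (∀ y : W, Hk.basis.repr C y ≠ 0 → bruhatLE cs y w) ∧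
  (∀ y : W, bruhatLE cs y w → y ≠ w →
    Hk.basis.repr C y ∈ K.gradeSum (cs.length w - cs.length y)) ∧
  bar C = K.qinv ^ cs.length w • C

/-- The standard parabolic subgroup `W_J = ⟨J⟩`. -/
def WJ (cs : CoxeterSystem M W) (J : Set B) : Subgroup W :=
  Subgroup.closure (cs.simple '' J)

/-- `W^J`: the set of minimal length coset representatives of `W/W_J`,
i.e. the `w ∈ W` with `ws > w` for all `s ∈ J`. -/
def minReps (cs : CoxeterSystem M W) (J : Set B) : Set W :=
  {w | ∀ i ∈ J, cs.length w < cs.length (w * cs.simple i)}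

/-- The Hecke algebra `H(W_J)` of the standard parabolic subgroup `W_J`
(with generating set `J`; the length function of `(W_J, J)` is the restriction
of that of `(W, S)`). -/
structure HeckeJ (cs : CoxeterSystem M W) (J : Set B) (R : Type*) [CommRing R] (q : R) where
  carrier : Type*
  [ring : Ring carrier]
  [alg : Algebra R carrier]
  T : WJ cs J → carrier
  basis : Module.Basis (WJ cs J) R carrier
  basis_eq : ∀ x, basis x = T x
  T_mul : ∀ x₁ x₂ : WJ cs J,
    cs.length ((x₁ : W) * (x₂ : W)) = cs.length (x₁ : W) + cs.length (x₂ : W) →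
    T x₁ * T x₂ = T (x₁ * x₂)
  T_quad : ∀ (i : B) (hi : i ∈ J),
    (T ⟨cs.simple i, Subgroup.subset_closure ⟨i, hi, rfl⟩⟩ + 1) *
      (T ⟨cs.simple i, Subgroup.subset_closure ⟨i, hi, rfl⟩⟩ - algebraMap R carrier q) = 0

attribute [instance] HeckeJ.ring HeckeJ.alg

/-- `(Mod, φ)` is (a realization of) the induced module `H^{J,a} = H ⊗_{H(W_J)} R^a`
together with `φ = φ^{J,a} : h ↦ h ⊗ 1^a`:  `φ` is surjective and its kernel is
the `R`-span of the elements `h (T_s - a)`, `s ∈ J`, which is exactly the kernel of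
`h ↦ h ⊗ 1^a`. -/
def IsInduced {q : R} (Hk : Hecke cs R q) (J : Set B) (a : R)
    (Mod : Type*) [AddCommGroup Mod] [Module R Mod] (φ : Hk.carrier →ₗ[R] Mod) : Prop :=
  Function.Surjective φ ∧
  LinearMap.ker φ = Submodule.span R
    {h : Hk.carrier | ∃ (g : Hk.carrier) (i : B), i ∈ J ∧
      h = g * (Hk.T (cs.simple i) - algebraMap R Hk.carrier a)}

/-- `C` is the parabolic Kazhdan–Lusztig basis element `C_w^{J,a}` of `H^{J,a}`:
`C = Σ_{y ∈ W^J, y ≤ w} P^{J,a}_{y,w} T_y^{J,a}` with `P^{J,a}_{w,w} = 1`,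
`P^{J,a}_{y,w} ∈ ⊕_{i=0}^{ℓ(w)-ℓ(y)-1} R_i` for `y < w`, and `barJ C = q^{-ℓ(w)} C`,
where `b` is the basis `(T_y^{J,a})_{y ∈ W^J}` of `H^{J,a}` and `barJ` its bar involution.
(The coefficient `P^{J,a}_{y,w}` of `C_w^{J,a}` is `b.repr C y`.) -/
def IsKLEltJ (K : KLRing R) {J : Set B} {Mod : Type*} [AddCommGroup Mod] [Module R Mod]
    (b : Module.Basis (minReps cs J) R Mod) (barJ : Mod →+ Mod)
    (w : minReps cs J) (C : Mod) : Prop :=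
  b.repr C w = 1 ∧
  (∀ y : minReps cs J, b.repr C y ≠ 0 → bruhatLE cs y.1 w.1) ∧
  (∀ y : minReps cs J, bruhatLE cs y.1 w.1 → y ≠ w →
    b.repr C y ∈ K.gradeSum (cs.length w.1 - cs.length y.1)) ∧
  barJ C = K.qinv ^ cs.length w.1 • C

theorem bruhatLE.eq_or_length_lt {x y : W} (h : bruhatLE cs x y) :
    x = y ∨ cs.length x < cs.length y := by
  induction h with
  | refl => exact .inl rfl
  | tail _ hstep ih => exact .inr (ih.elim (· ▸ hstep.2) (·.trans hstep.2))

theorem bruhatLE.length_le {x y : W} (h : bruhatLE cs x y) : cs.length x ≤ cs.length y :=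
  h.eq_or_length_lt.elim (fun h => h ▸ le_rfl) le_of_lt

namespace KLRing

variable (K : KLRing R)

def qUnit : Rˣ := ⟨K.q, K.qinv, K.q_qinv, by rw [mul_comm, K.q_qinv]⟩

theorem qinv_mem_grade : K.qinv ∈ K.grade (-2) := K.conj_q ▸ K.conj_grade 2 K.q K.q_mem

theorem zpow_qUnit_mem_grade (k : ℤ) : ((K.qUnit ^ k : Rˣ) : R) ∈ K.grade (2 * k) := by
  induction k using Int.induction_on with
  | zero => simpa using K.one_mem
  | succ k ih =>
    rw [zpow_add_one, Units.val_mul, mul_add, mul_one]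
    exact K.grade_mul _ _ _ _ ih K.q_mem
  | pred k ih =>
    rw [zpow_sub_one, Units.val_mul, mul_sub, mul_one, sub_eq_add_neg]
    exact K.grade_mul _ _ _ _ ih K.qinv_mem_grade

theorem conj_zpow_qUnit (k : ℤ) : K.conj (K.qUnit ^ k : Rˣ) = ((K.qUnit ^ (-k) : Rˣ) : R) := by
  have h : Units.map (K.conj : R →* R) K.qUnit = K.qUnit⁻¹ := Units.ext K.conj_q
  change (K.conj : R →* R) _ = _
  rw [← Units.coe_map (K.conj : R →* R), map_zpow, h, inv_zpow']

/-- `ℤ[q, q⁻¹] ⊆ R`. -/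
def laurent : Subring R :=
  { AddSubgroup.closure (Set.range fun k : ℤ => ((K.qUnit ^ k : Rˣ) : R)) with
    one_mem' := AddSubgroup.subset_closure ⟨0, by simp⟩
    mul_mem' := fun {r s} hr hs => by
      change _ ∈ AddSubgroup.closure _ at hr hs ⊢
      induction hr, hs using AddSubgroup.closure_induction₂ with
      | mem r s hr hs =>
        obtain ⟨j, rfl⟩ := hr
        obtain ⟨k, rfl⟩ := hs
        exact AddSubgroup.subset_closure ⟨j + k, by simp [zpow_add]⟩
      | zero_left => simp
      | zero_right => simp
      | add_left _ _ _ _ _ _ h₁ h₂ => rw [add_mul]; exact add_mem h₁ h₂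
      | add_right _ _ _ _ _ _ h₁ h₂ => rw [mul_add]; exact add_mem h₁ h₂
      | neg_left _ _ _ _ h => rw [neg_mul]; exact neg_mem h
      | neg_right _ _ _ _ h => rw [mul_neg]; exact neg_mem h }

theorem laurent_le {S : AddSubgroup R} (h : ∀ k : ℤ, ((K.qUnit ^ k : Rˣ) : R) ∈ S) :
    K.laurent.toAddSubgroup ≤ S :=
  (AddSubgroup.closure_le _).2 (Set.range_subset_iff.2 h)

theorem zpow_qUnit_mem_laurent (k : ℤ) : ((K.qUnit ^ k : Rˣ) : R) ∈ K.laurent :=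
  AddSubgroup.subset_closure ⟨k, rfl⟩

theorem q_mem_laurent : K.q ∈ K.laurent := by
  simpa [qUnit] using K.zpow_qUnit_mem_laurent 1

theorem qinv_mem_laurent : K.qinv ∈ K.laurent := by
  simpa [qUnit] using K.zpow_qUnit_mem_laurent (-1)

theorem conj_mem_laurent {r : R} (hr : r ∈ K.laurent) : K.conj r ∈ K.laurent :=
  K.laurent_le (S := K.laurent.toAddSubgroup.comap K.conj.toAddMonoidHom)
    (fun k => by simpa [conj_zpow_qUnit] using K.zpow_qUnit_mem_laurent (-k)) hr

theorem aeval_mem_laurent (p : ℤ[X]) : aeval K.q p ∈ K.laurent := by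
  induction p using Polynomial.induction_on' with
  | add p p' hp hp' => rw [map_add]; exact add_mem hp hp'
  | monomial n c =>
    rw [aeval_monomial, eq_intCast, ← zsmul_eq_mul]
    exact zsmul_mem (pow_mem K.q_mem_laurent n) c

/-- The values `p(q)`, `p ∈ ℤ[X]`, with `2 deg p ≤ n - 1`: the shape of a Kazhdan–Lusztig
polynomial `P_{x,w}` with `ℓ(w) - ℓ(x) = n`. For `n = 0` the truncated subtraction admits the
constants, matching `P_{w,w} = 1`. -/
noncomputable def klPolys (n : ℕ) : AddSubgroup R :=
  ((degreeLE ℤ ((n - 1) / 2 : ℕ)).map (aeval K.q).toLinearMap).toAddSubgroup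

variable {K}

theorem mem_klPolys {n : ℕ} {r : R} :
    r ∈ K.klPolys n ↔ ∃ p : ℤ[X], aeval K.q p = r ∧ 2 * p.natDegree ≤ n - 1 := by
  simp only [klPolys, Submodule.mem_toAddSubgroup, Submodule.mem_map, mem_degreeLE,
    ← natDegree_le_iff_degree_le, AlgHom.toLinearMap_apply]
  exact exists_congr fun p => ⟨fun ⟨h, hp⟩ => ⟨hp, by omega⟩, fun ⟨hp, h⟩ => ⟨by omega, hp⟩⟩

instance : SetLike.GradedMonoid K.klPolys where
  one_mem := mem_klPolys.2 ⟨1, map_one _, by simp⟩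
  mul_mem m n r s hr hs := by
    obtain ⟨p, rfl, hp⟩ := mem_klPolys.1 hr
    obtain ⟨p', rfl, hp'⟩ := mem_klPolys.1 hs
    refine mem_klPolys.2 ⟨p * p', map_mul _ _ _, ?_⟩
    have := natDegree_mul_le (p := p) (q := p')
    omega

theorem neg_one_pow_mul_mem_klPolys (k : ℕ) {n : ℕ} {r : R} (hr : r ∈ K.klPolys n) :
    (-1) ^ k * r ∈ K.klPolys n := by
  simpa using SetLike.mul_mem_graded
    (SetLike.pow_mem_graded k (neg_mem (SetLike.one_mem_graded K.klPolys))) hr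

variable (K)

theorem klPolys_le_laurent (n : ℕ) : K.klPolys n ≤ K.laurent.toAddSubgroup := fun _ hr => by
  obtain ⟨p, rfl, -⟩ := mem_klPolys.1 hr
  exact K.aeval_mem_laurent p

noncomputable instance : DirectSum.Decomposition K.grade := K.decomp.chooseDecomposition

noncomputable def proj (d : ℤ) : R →+ R :=
  (K.grade d).subtype.comp
    ((DFinsupp.evalAddMonoidHom d).comp (DirectSum.decomposeAddEquiv K.grade).toAddMonoidHom)

variable {K}

theorem proj_of_mem_same {d : ℤ} {r : R} (hr : r ∈ K.grade d) : K.proj d r = r :=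
  DirectSum.decompose_of_mem_same K.grade hr

theorem proj_of_mem_ne {i d : ℤ} {r : R} (hr : r ∈ K.grade i) (h : i ≠ d) : K.proj d r = 0 :=
  DirectSum.decompose_of_mem_ne K.grade hr h

theorem sum_proj_of_mem_gradeSum {n : ℕ} {r : R} (hr : r ∈ K.gradeSum n) :
    ∑ d ∈ Finset.range n, K.proj d r = r := by
  suffices h : K.gradeSum n ≤ (∑ d ∈ Finset.range n, K.proj d).eqLocus (AddMonoidHom.id R) by
    have h' : (∑ d ∈ Finset.range n, K.proj d) r = r := h hr
    rwa [AddMonoidHom.finsetSum_apply] at h'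
  refine iSup₂_le fun i hi r hr => ?_
  change (∑ d ∈ Finset.range n, K.proj d) r = r
  rw [AddMonoidHom.finsetSum_apply,
    Finset.sum_eq_single i (fun d _ hd => proj_of_mem_ne hr (by omega)) (fun h => absurd hi h),
    proj_of_mem_same hr]

theorem proj_q_pow_mul_conj_of_mem_gradeSum {n : ℕ} {r : R} (hr : r ∈ K.gradeSum n) {d : ℕ}
    (hd : d < n) : K.proj d (K.q ^ n * K.conj r) = 0 := by
  suffices K.gradeSum n ≤
      ((K.proj d).comp ((AddMonoidHom.mulLeft (K.q ^ n)).comp K.conj.toAddMonoidHom)).ker from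
    this hr
  refine iSup₂_le fun i hi r hr => ?_
  have hq : K.q ^ n ∈ K.grade (2 * n) := by
    simpa [qUnit] using K.zpow_qUnit_mem_grade n
  have := K.grade_mul _ _ _ _ hq (K.conj_grade _ _ hr)
  simp only [AddMonoidHom.mem_ker, AddMonoidHom.coe_comp, Function.comp_apply,
    AddMonoidHom.coe_mulLeft, RingHom.toAddMonoidHom_eq_coe, AddMonoidHom.coe_coe]
  exact proj_of_mem_ne this (by simp at hi; omega)

theorem sum_proj_mem_klPolys {L : R} (hL : L ∈ K.laurent) (n : ℕ) :
    ∑ d ∈ Finset.range n, K.proj d L ∈ K.klPolys n := by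
  suffices h : K.laurent.toAddSubgroup ≤ (K.klPolys n).comap (∑ d ∈ Finset.range n, K.proj d) by
    simpa only [AddSubgroup.mem_comap, AddMonoidHom.finsetSum_apply] using h hL
  refine K.laurent_le fun k => ?_
  have hk := K.zpow_qUnit_mem_grade k
  simp only [AddSubgroup.mem_comap, AddMonoidHom.finsetSum_apply]
  by_cases hkn : ∃ m : ℕ, k = m ∧ 2 * m < n
  · obtain ⟨m, rfl, hm⟩ := hkn
    rw [Finset.sum_eq_single (2 * m) (fun d _ hd => proj_of_mem_ne hk (by omega))
      (fun h => absurd (Finset.mem_range.2 hm) h)]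
    push_cast
    rw [proj_of_mem_same hk]
    exact mem_klPolys.2 ⟨X ^ m, by simp [qUnit], by simp; omega⟩
  · rw [Finset.sum_eq_zero fun d hd => proj_of_mem_ne hk ?_]
    · exact zero_mem _
    · intro h
      exact hkn ⟨d / 2, by omega, by simp at hd; omega⟩

theorem mem_klPolys_of_sub_mem_laurent {n : ℕ} {r : R} (hr : r ∈ K.gradeSum n)
    (hL : r - K.q ^ n * K.conj r ∈ K.laurent) : r ∈ K.klPolys n := by
  have hsum : ∑ d ∈ Finset.range n, K.proj d (r - K.q ^ n * K.conj r) = r := by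
    simp_rw [map_sub, Finset.sum_sub_distrib, sum_proj_of_mem_gradeSum hr]
    rw [Finset.sum_eq_zero fun d hd =>
      proj_q_pow_mul_conj_of_mem_gradeSum hr (Finset.mem_range.1 hd), sub_zero]
  exact hsum ▸ sum_proj_mem_klPolys hL n

variable (K) {ι V : Type*} [AddCommGroup V] [Module R V]

def laurentBelow (β : Module.Basis ι R V) (len : ι → ℕ) (m : ℕ) : AddSubgroup V where
  carrier := {v | ∀ i, β.repr v i ∈ K.laurent ∧ (m ≤ len i → β.repr v i = 0)}
  add_mem' {v v'} hv hv' i := by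
    simp only [map_add, Finsupp.add_apply]
    exact ⟨add_mem (hv i).1 (hv' i).1, fun h => by rw [(hv i).2 h, (hv' i).2 h, add_zero]⟩
  zero_mem' i := by simp
  neg_mem' {v} hv i := by
    simp only [map_neg, Finsupp.neg_apply, neg_eq_zero]
    exact ⟨neg_mem (hv i).1, (hv i).2⟩

variable {K} {β : Module.Basis ι R V} {len : ι → ℕ} {m : ℕ}

theorem smul_basis_mem_laurentBelow {r : R} (hr : r ∈ K.laurent) {i : ι} (hi : len i < m) :
    r • β i ∈ K.laurentBelow β len m := fun j => by
  by_cases h : i = j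
  · subst h
    simpa using ⟨hr, fun h => absurd hi h.not_gt⟩
  · simp [h]

theorem smul_mem_laurentBelow {r : R} (hr : r ∈ K.laurent) {v : V}
    (hv : v ∈ K.laurentBelow β len m) : r • v ∈ K.laurentBelow β len m := fun i => by
  simpa using ⟨K.laurent.mul_mem hr (hv i).1, fun h => by rw [(hv i).2 h, mul_zero]⟩

theorem laurentBelow_mono {m' : ℕ} (h : m ≤ m') :
    K.laurentBelow β len m ≤ K.laurentBelow β len m' :=
  fun _ hv i => ⟨(hv i).1, fun h' => (hv i).2 (h.trans h')⟩

theorem laurentBelow_le_comap {V' : Type*} [AddCommGroup V'] (g : V →+ V') {S : AddSubgroup V'}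
    (h : ∀ r ∈ K.laurent, ∀ i, len i < m → g (r • β i) ∈ S) :
    K.laurentBelow β len m ≤ S.comap g := by
  intro v hv
  rw [AddSubgroup.mem_comap, ← β.linearCombination_repr v, Finsupp.linearCombination_apply,
    Finsupp.sum, map_sum]
  exact sum_mem fun i hi =>
    h _ (hv i).1 i (not_le.1 fun hm => Finsupp.mem_support_iff.1 hi ((hv i).2 hm))

end KLRing

section Unitriangular

variable {ι : Type*} (ℓ : ι → ℕ) (le : ι → ι → Prop) (P : ι → ι →₀ R)

/-- `P z` is the column of `z`: `P z y` is the `(y, z)` entry of the matrix. -/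
structure IsUnitriangular : Prop where
  diag : ∀ z, P z z = 1
  le_of_ne_zero : ∀ {z y}, P z y ≠ 0 → le y z
  eq_or_lt_of_le : ∀ {x y}, le x y → x = y ∨ ℓ x < ℓ y

variable {ℓ le P}

theorem IsUnitriangular.finsum_mem_interval_mul_eq_sum (hP : IsUnitriangular ℓ le P)
    (f : ι → R) (w z : ι) :
    ∑ᶠ y ∈ {y | le w y ∧ le y z}, f y * P z y
      = ∑ y ∈ (P z).support.filter (le w), f y * P z y := by
  refine finsum_cond_eq_sum_of_cond_iff _ fun {y} hy => ?_
  have hPy := right_ne_zero_of_mul hy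
  simp [hPy, hP.le_of_ne_zero hPy]

theorem IsUnitriangular.sum_filter_le_eq_add (hP : IsUnitriangular ℓ le P) (f : ι → R)
    {w z : ι} (hwz : le w z) :
    ∑ y ∈ (P z).support.filter (le w), f y * P z y
      = f z + ∑ y ∈ (P z).support.filter (fun y => le w y ∧ ℓ y < ℓ z), f y * P z y := by
  have hsub : (P z).support.filter (le w)
      ⊆ insert z ((P z).support.filter fun y => le w y ∧ ℓ y < ℓ z) := by
    intro y hy
    simp only [Finset.mem_filter, Finsupp.mem_support_iff, Finset.mem_insert] at hy ⊢
    rcases hP.eq_or_lt_of_le (hP.le_of_ne_zero hy.1) with rfl | h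
    exacts [.inl rfl, .inr ⟨hy.1, hy.2, h⟩]
  rw [Finset.sum_subset hsub fun y hy hy' => ?_, Finset.sum_insert (by simp), hP.diag, mul_one]
  by_contra hne
  refine hy' (Finset.mem_filter.2 ⟨Finsupp.mem_support_iff.2 (right_ne_zero_of_mul hne), ?_⟩)
  rcases Finset.mem_insert.1 hy with rfl | hy
  exacts [hwz, (Finset.mem_filter.1 hy).2.1]

variable [DecidableEq ι] (ℓ le P)

/-- The entries `X w z`, `w ≤ z`, of the inverse of a unitriangular `P`. -/
noncomputable def triangularInv (w z : ι) : R :=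
  if w = z then 1 else
    -∑ y ∈ ((P z).support.filter fun y => le w y ∧ ℓ y < ℓ z).attach,
      triangularInv w y.1 * P z y.1
termination_by ℓ z
decreasing_by exact (Finset.mem_filter.1 y.2).2.2

variable {ℓ le P}

theorem triangularInv_eq (w z : ι) :
    triangularInv ℓ le P w z = if w = z then 1 else
      -∑ y ∈ (P z).support.filter (fun y => le w y ∧ ℓ y < ℓ z),
        triangularInv ℓ le P w y * P z y := by
  rw [triangularInv, Finset.sum_attach _ fun y => triangularInv ℓ le P w y * P z y]

theorem IsUnitriangular.sum_triangularInv_mul (hP : IsUnitriangular ℓ le P) {w z : ι}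
    (hwz : le w z) :
    ∑ y ∈ (P z).support.filter (le w), triangularInv ℓ le P w y * P z y
      = if w = z then 1 else 0 := by
  rw [hP.sum_filter_le_eq_add _ hwz, triangularInv_eq w z]
  split_ifs with h
  · subst h
    refine add_eq_left.2 (Finset.sum_eq_zero fun y hy => ?_)
    obtain ⟨-, hwy, hyw⟩ := Finset.mem_filter.1 hy
    rcases hP.eq_or_lt_of_le hwy with rfl | h <;> omega
  · exact neg_add_cancel _

theorem IsUnitriangular.eq_triangularInv (hP : IsUnitriangular ℓ le P) (X : ι → ι → R)
    (hX : ∀ w z, le w z → ∑ y ∈ (P z).support.filter (le w), X w y * P z y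
      = if w = z then 1 else 0) {w z : ι} (hwz : le w z) :
    X w z = triangularInv ℓ le P w z := by
  induction hn : ℓ z using Nat.strong_induction_on generalizing z with
  | _ n ih =>
  have hX' := hX w z hwz
  have hinv := hP.sum_triangularInv_mul hwz
  rw [hP.sum_filter_le_eq_add _ hwz] at hX' hinv
  have hrest : ∑ y ∈ (P z).support.filter (fun y => le w y ∧ ℓ y < ℓ z), X w y * P z y
      = ∑ y ∈ (P z).support.filter (fun y => le w y ∧ ℓ y < ℓ z),
          triangularInv ℓ le P w y * P z y := by
    refine Finset.sum_congr rfl fun y hy => ?_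
    obtain ⟨-, hwy, hyz⟩ := Finset.mem_filter.1 hy
    rw [ih _ (hn ▸ hyz) hwy rfl]
  linear_combination hX' - hinv - hrest

theorem IsUnitriangular.triangularInv_mem (hP : IsUnitriangular ℓ le P) {S : ℕ → AddSubgroup R}
    [SetLike.GradedMonoid S] (hPS : ∀ z y, P z y ∈ S (ℓ z - ℓ y)) {w z : ι} (hwz : le w z) :
    triangularInv ℓ le P w z ∈ S (ℓ z - ℓ w) := by
  induction hn : ℓ z using Nat.strong_induction_on generalizing z with
  | _ n ih =>
  rw [triangularInv_eq, ← hn]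
  split_ifs with h
  · subst h
    simpa using SetLike.one_mem_graded S
  · refine neg_mem (sum_mem fun y hy => ?_)
    obtain ⟨-, hwy, hyz⟩ := Finset.mem_filter.1 hy
    have hlen : ℓ y - ℓ w + (ℓ z - ℓ y) = ℓ z - ℓ w := by
      rcases hP.eq_or_lt_of_le hwy with rfl | h <;> omega
    exact hlen ▸ SetLike.mul_mem_graded (ih _ (hn ▸ hyz) hwy rfl) (hPS z y)

end Unitriangular

namespace Hecke

section Generic

variable {q : R} (Hk : Hecke cs R q)

theorem T_one : Hk.T 1 = 1 := by
  have h : LinearMap.mulRight R (Hk.T 1) = LinearMap.id := Hk.basis.ext fun w => by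
    simp [Hk.basis_eq, Hk.T_mul w 1 (by simp)]
  simpa using LinearMap.congr_fun h 1

theorem T_simple_mul_self (i : B) :
    Hk.T (cs.simple i) * Hk.T (cs.simple i) = (q - 1) • Hk.T (cs.simple i) + q • 1 := by
  have h := Hk.T_quad i
  rw [Algebra.algebraMap_eq_smul_one, add_mul, mul_sub, mul_sub, one_mul, one_mul,
    mul_smul_comm, mul_one] at h
  rw [sub_smul, one_smul, ← sub_eq_zero, ← h]
  abel

theorem T_mul_T_simple (x : W) (i : B) :
    Hk.T x * Hk.T (cs.simple i) =
      if cs.length (x * cs.simple i) = cs.length x + 1 then Hk.T (x * cs.simple i)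
      else (q - 1) • Hk.T x + q • Hk.T (x * cs.simple i) := by
  split_ifs with h
  · exact Hk.T_mul x _ (by rw [h, cs.length_simple])
  · have hx : cs.length (x * cs.simple i) + 1 = cs.length x := by
      rcases cs.length_mul_simple x i with h' | h' <;> omega
    have hTx : Hk.T x = Hk.T (x * cs.simple i) * Hk.T (cs.simple i) := by
      rw [Hk.T_mul _ _ (by rw [mul_assoc, cs.simple_mul_simple_self, mul_one, cs.length_simple,
        hx]), mul_assoc, cs.simple_mul_simple_self, mul_one]
    rw [hTx, mul_assoc, T_simple_mul_self, mul_add, mul_smul_comm, mul_smul_comm, mul_one]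

end Generic

variable {K : KLRing R} (Hk : Hecke cs R K.q)

theorem T_simple_mul_eq_one (i : B) :
    Hk.T (cs.simple i) * (K.qinv • Hk.T (cs.simple i) + (K.qinv - 1) • 1) = 1 ∧
      (K.qinv • Hk.T (cs.simple i) + (K.qinv - 1) • 1) * Hk.T (cs.simple i) = 1 := by
  have hq : K.q * K.qinv = 1 := K.q_qinv
  constructor
  · rw [mul_add, mul_smul_comm, mul_smul_comm, mul_one, T_simple_mul_self]
    match_scalars <;> linear_combination hq
  · rw [add_mul, smul_mul_assoc, smul_mul_assoc, one_mul, T_simple_mul_self]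
    match_scalars <;> linear_combination hq

theorem isUnit_T_simple (i : B) : IsUnit (Hk.T (cs.simple i)) :=
  ⟨⟨_, _, (Hk.T_simple_mul_eq_one i).1, (Hk.T_simple_mul_eq_one i).2⟩, rfl⟩

theorem inverse_T_simple (i : B) :
    Ring.inverse (Hk.T (cs.simple i)) = K.qinv • Hk.T (cs.simple i) + (K.qinv - 1) • 1 :=
  Ring.inverse_unit ⟨_, _, (Hk.T_simple_mul_eq_one i).1, (Hk.T_simple_mul_eq_one i).2⟩

theorem smul_T_mem_laurentBelow {m : ℕ} {r : R} (hr : r ∈ K.laurent) {x : W}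
    (hx : cs.length x < m) : r • Hk.T x ∈ K.laurentBelow Hk.basis cs.length m :=
  Hk.basis_eq x ▸ KLRing.smul_basis_mem_laurentBelow hr hx

theorem mul_T_simple_mem_laurentBelow {m : ℕ} {h : Hk.carrier}
    (hh : h ∈ K.laurentBelow Hk.basis cs.length m) (i : B) :
    h * Hk.T (cs.simple i) ∈ K.laurentBelow Hk.basis cs.length (m + 1) := by
  refine KLRing.laurentBelow_le_comap (S := K.laurentBelow Hk.basis cs.length (m + 1))
    (AddMonoidHom.mulRight (Hk.T (cs.simple i))) (fun r hr x hx => ?_) hh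
  simp only [AddMonoidHom.coe_mulRight, Hk.basis_eq, smul_mul_assoc, T_mul_T_simple]
  have := cs.length_mul_simple x i
  split_ifs
  · exact Hk.smul_T_mem_laurentBelow hr (by omega)
  · rw [smul_add, smul_smul, smul_smul]
    exact add_mem
      (Hk.smul_T_mem_laurentBelow (mul_mem hr (sub_mem K.q_mem_laurent (one_mem _))) (by omega))
      (Hk.smul_T_mem_laurentBelow (mul_mem hr K.q_mem_laurent) (by omega))

theorem mul_inverse_T_simple_mem_laurentBelow {m : ℕ} {h : Hk.carrier}
    (hh : h ∈ K.laurentBelow Hk.basis cs.length m) (i : B) :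
    h * Ring.inverse (Hk.T (cs.simple i)) ∈ K.laurentBelow Hk.basis cs.length (m + 1) := by
  rw [inverse_T_simple, mul_add, mul_smul_comm, mul_smul_comm, mul_one]
  exact add_mem
    (KLRing.smul_mem_laurentBelow K.qinv_mem_laurent (Hk.mul_T_simple_mem_laurentBelow hh i))
    (KLRing.smul_mem_laurentBelow (sub_mem K.qinv_mem_laurent (one_mem _))
      (KLRing.laurentBelow_mono m.le_succ hh))

theorem inverse_T_sub_mem_laurentBelow (y : W) :
    Ring.inverse (Hk.T y) - K.qinv ^ cs.length y • Hk.T y⁻¹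
      ∈ K.laurentBelow Hk.basis cs.length (cs.length y) := by
  induction hn : cs.length y generalizing y with
  | zero =>
    obtain rfl := cs.length_eq_zero_iff.1 hn
    simp [T_one]
  | succ n ih =>
    obtain ⟨i, hi⟩ := cs.exists_leftDescent_of_ne_one (w := y) (by rintro rfl; simp at hn)
    set u := cs.simple i * y
    have hu : cs.length u = n := by
      have := cs.isLeftDescent_iff.1 hi
      change cs.length (cs.simple i * y) = n
      omega
    have hy : y = cs.simple i * u := (cs.simple_mul_simple_cancel_left i).symm
    have hTy : Hk.T y = Hk.T (cs.simple i) * Hk.T u := by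
      rw [hy, Hk.T_mul _ _ (by rw [← hy, hn, hu, cs.length_simple, add_comm])]
    have hTy' : Hk.T u⁻¹ * Hk.T (cs.simple i) = Hk.T y⁻¹ := by
      rw [Hk.T_mul _ _ (by rw [cs.length_inv, cs.length_simple, ← cs.inv_simple, ← mul_inv_rev,
        ← hy, cs.length_inv, hn, hu]), ← cs.inv_simple, ← mul_inv_rev, ← hy]
    have key : Ring.inverse (Hk.T y) - K.qinv ^ (n + 1) • Hk.T y⁻¹
        = (Ring.inverse (Hk.T u) - K.qinv ^ n • Hk.T u⁻¹) * Ring.inverse (Hk.T (cs.simple i))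
          + (K.qinv ^ n * (K.qinv - 1)) • Hk.T u⁻¹ := by
      rw [hTy, Ring.inverse_mul (.inl (Hk.isUnit_T_simple i)), inverse_T_simple, ← hTy']
      simp only [sub_mul, mul_add, smul_mul_assoc, mul_smul_comm, mul_one]
      module
    rw [key]
    refine add_mem (Hk.mul_inverse_T_simple_mem_laurentBelow (ih u hu) i)
      (Hk.smul_T_mem_laurentBelow
        (mul_mem (pow_mem K.qinv_mem_laurent n) (sub_mem K.qinv_mem_laurent (one_mem _))) ?_)
    rw [cs.length_inv, hu]
    exact n.lt_succ_self

end Hecke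

section Induced

variable {K : KLRing R} {J : Set B} {Hk : Hecke cs R K.q} {a : R} {Mod : Type*}
  [AddCommGroup Mod] [Module R Mod] {φ : Hk.carrier →ₗ[R] Mod}
  {b : Module.Basis (minReps cs J) R Mod} {bar : Hk.carrier →+* Hk.carrier} {barJ : Mod →+ Mod}

theorem IsInduced.exists_map_T_eq_smul_basis (hInd : IsInduced Hk J a Mod φ)
    (hb : ∀ u : minReps cs J, b u = φ (Hk.T u.1)) (x : W) :
    ∃ (u : minReps cs J) (m : ℕ), m + cs.length u.1 = cs.length x ∧ φ (Hk.T x) = a ^ m • b u := by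
  induction hn : cs.length x using Nat.strong_induction_on generalizing x with
  | _ n ih =>
  by_cases hx : x ∈ minReps cs J
  · exact ⟨⟨x, hx⟩, 0, by simp [hn], by simp [hb]⟩
  obtain ⟨i, hiJ, hi⟩ : ∃ i ∈ J, ¬cs.length x < cs.length (x * cs.simple i) := by
    simpa [minReps] using hx
  have hx' : cs.length (x * cs.simple i) + 1 = n := by
    rcases cs.length_mul_simple x i with h | h <;> omega
  set x' := x * cs.simple i
  have hxx' : x = x' * cs.simple i := by simp [x']
  have hker : φ (Hk.T x' * (Hk.T (cs.simple i) - algebraMap R Hk.carrier a)) = 0 := by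
    rw [← LinearMap.mem_ker, hInd.2]
    exact Submodule.subset_span ⟨_, i, hiJ, rfl⟩
  have hφx : φ (Hk.T x) = a • φ (Hk.T x') := by
    rw [mul_sub, ← Algebra.commutes, ← Algebra.smul_def, map_sub, map_smul, sub_eq_zero,
      Hk.T_mul _ _ (by rw [← hxx', cs.length_simple, hx', hn])] at hker
    rw [hxx', hker]
  obtain ⟨u, m, hm, hφ⟩ := ih _ (by omega) x' rfl
  exact ⟨u, m + 1, by omega, by rw [hφx, hφ, smul_smul, pow_succ']⟩

theorem IsInduced.map_mem_laurentBelow (hInd : IsInduced Hk J a Mod φ) (ha : a ∈ K.laurent)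
    (hb : ∀ u : minReps cs J, b u = φ (Hk.T u.1)) {m : ℕ} {h : Hk.carrier}
    (hh : h ∈ K.laurentBelow Hk.basis cs.length m) :
    φ h ∈ K.laurentBelow b (fun u => cs.length u.1) m := by
  refine KLRing.laurentBelow_le_comap (S := K.laurentBelow b (fun u => cs.length u.1) m)
    φ.toAddMonoidHom (fun r hr x hx => ?_) hh
  obtain ⟨u, k, hk, hφ⟩ := hInd.exists_map_T_eq_smul_basis hb x
  simp only [LinearMap.toAddMonoidHom_coe, map_smul, Hk.basis_eq, hφ, smul_smul]
  exact KLRing.smul_basis_mem_laurentBelow (mul_mem hr (pow_mem ha k)) (by omega)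

theorem repr_barJ (hbar : IsBar K Hk bar) (hb : ∀ u : minReps cs J, b u = φ (Hk.T u.1))
    (hbarJ : ∀ h : Hk.carrier, barJ (φ h) = φ (bar h)) (v : Mod) (x : minReps cs J) :
    b.repr (barJ v) x = ∑ y ∈ (b.repr v).support,
      K.conj (b.repr v y) * b.repr (φ (Ring.inverse (Hk.T y.1⁻¹))) x := by
  conv_lhs => rw [← b.linearCombination_repr v, Finsupp.linearCombination_apply, Finsupp.sum]
  simp only [map_sum, hb, ← map_smul, hbarJ, Finsupp.coe_finsetSum, Finset.sum_apply]
  refine Finset.sum_congr rfl fun y _ => ?_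
  rw [hbar, map_smul, map_smul, Finsupp.smul_apply, smul_eq_mul]

theorem repr_barJ_sub_mem_laurent (hInd : IsInduced Hk J a Mod φ) (ha : a ∈ K.laurent)
    (hbar : IsBar K Hk bar) (hb : ∀ u : minReps cs J, b u = φ (Hk.T u.1))
    (hbarJ : ∀ h : Hk.carrier, barJ (φ h) = φ (bar h)) {v : Mod} {x : minReps cs J}
    (hv : ∀ y : minReps cs J, cs.length x.1 < cs.length y.1 → b.repr v y ∈ K.laurent) :
    b.repr (barJ v) x - K.conj (b.repr v x) * K.qinv ^ cs.length x.1 ∈ K.laurent := by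
  set D : minReps cs J → Mod :=
    fun y => φ (Ring.inverse (Hk.T y.1⁻¹)) - K.qinv ^ cs.length y.1 • b y
  have hD : ∀ y, D y ∈ K.laurentBelow b (fun u => cs.length u.1) (cs.length y.1) := fun y => by
    simpa [D, hb] using hInd.map_mem_laurentBelow ha hb (Hk.inverse_T_sub_mem_laurentBelow y.1⁻¹)
  have hsplit : b.repr (barJ v) x = K.conj (b.repr v x) * K.qinv ^ cs.length x.1
      + ∑ y ∈ (b.repr v).support, K.conj (b.repr v y) * b.repr (D y) x := by
    rw [repr_barJ hbar hb hbarJ]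
    simp only [D, map_sub, map_smul, Finsupp.sub_apply, Finsupp.smul_apply, b.repr_self,
      smul_eq_mul, mul_sub, Finset.sum_sub_distrib, Finsupp.single_apply, mul_ite, mul_one,
      mul_zero]
    rw [Finset.sum_ite_eq']
    split_ifs with hx
    · abel
    · rw [Finsupp.notMem_support_iff.1 hx, map_zero, zero_mul]
      abel
  rw [hsplit, add_sub_cancel_left]
  refine sum_mem fun y _ => ?_
  by_cases hDx : b.repr (D y) x = 0
  · simp [hDx]
  exact mul_mem (K.conj_mem_laurent (hv y (not_le.1 fun h => hDx ((hD y x).2 h)))) (hD y x).1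

theorem parabolicKL_mem_klPolys (hInd : IsInduced Hk J a Mod φ) (ha : a ∈ K.laurent)
    (hbar : IsBar K Hk bar) (hb : ∀ u : minReps cs J, b u = φ (Hk.T u.1))
    (hbarJ : ∀ h : Hk.carrier, barJ (φ h) = φ (bar h)) {CJ : minReps cs J → Mod}
    (hCJ : ∀ u : minReps cs J, IsKLEltJ K b barJ u (CJ u)) (w x : minReps cs J) :
    b.repr (CJ w) x ∈ K.klPolys (cs.length w.1 - cs.length x.1) := by
  induction hn : cs.length w.1 - cs.length x.1 using Nat.strong_induction_on generalizing x with
  | _ n ih =>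
  obtain ⟨hdiag, hle, hgrade, hbarC⟩ := hCJ w
  by_cases hx0 : b.repr (CJ w) x = 0
  · rw [hx0]
    exact zero_mem _
  by_cases hxw : x = w
  · subst hxw
    rw [hdiag, ← hn, Nat.sub_self]
    exact SetLike.one_mem_graded _
  have hxw' : bruhatLE cs x.1 w.1 := hle x hx0
  have hlen : cs.length w.1 = n + cs.length x.1 := by
    have := hxw'.eq_or_length_lt.resolve_left fun h => hxw (Subtype.ext h)
    omega
  refine K.mem_klPolys_of_sub_mem_laurent (hn ▸ hgrade x hxw' hxw) ?_
  have hbarx := repr_barJ_sub_mem_laurent hInd ha hbar hb hbarJ (v := CJ w) (x := x)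
    fun y hy => by
      by_cases hy0 : b.repr (CJ w) y = 0
      · rw [hy0]
        exact zero_mem _
      have := (hle y hy0).length_le
      exact K.klPolys_le_laurent _ (ih _ (by omega) y rfl)
  rw [hbarC, map_smul, Finsupp.smul_apply, smul_eq_mul, hlen] at hbarx
  have hq (k : ℕ) : K.q ^ k * K.qinv ^ k = 1 := by rw [← mul_pow, K.q_qinv, one_pow]
  convert mul_mem (pow_mem K.q_mem_laurent (n + cs.length x.1)) hbarx using 1
  linear_combination (-b.repr (CJ w) x) * hq (n + cs.length x.1)
    + (K.q ^ n * K.conj (b.repr (CJ w) x)) * hq (cs.length x.1)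

end Induced

/-- existence and uniqueness of the inverse parabolic Kazhdan–Lusztig
polynomials `Q^{J,a}_{w,y}` (for `w ≤ y` in `W^J`), determined by
`Σ_{y ∈ W^J, w ≤ y ≤ z} (-1)^{ℓ(y)-ℓ(w)} Q^{J,a}_{w,y} P^{J,a}_{y,z} = δ_{w,z}`;
moreover each `Q^{J,a}_{w,y} ∈ ℤ[q]`, `Q^{J,a}_{w,w} = 1`, and
`deg Q^{J,a}_{w,y} ≤ (ℓ(y)-ℓ(w)-1)/2` for `w < y`.  Here the parabolic
Kazhdan–Lusztig polynomial `P^{J,a}_{y,z}` is the coefficient `b.repr (CJ z) y`. -/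
theorem statement14 (K : KLRing R) (J : Set B) (Hk : Hecke cs R K.q)
    (bar : Hk.carrier →+* Hk.carrier) (hbar : IsBar K Hk bar)
    (a : R) (ha : a = K.q ∨ a = -1)
    (Mod : Type*) [AddCommGroup Mod] [Module R Mod]
    (φ : Hk.carrier →ₗ[R] Mod) (hInd : IsInduced Hk J a Mod φ)
    (b : Module.Basis (minReps cs J) R Mod) (hb : ∀ u : minReps cs J, b u = φ (Hk.T u.1))
    (barJ : Mod →+ Mod) (hbarJ : ∀ h : Hk.carrier, barJ (φ h) = φ (bar h))
    (CJ : minReps cs J → Mod) (hCJ : ∀ u : minReps cs J, IsKLEltJ K b barJ u (CJ u)) :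
    ∃ QJ : minReps cs J → minReps cs J → R,
      (∀ w z : minReps cs J, bruhatLE cs w.1 z.1 →
        (∑ᶠ y ∈ {y : minReps cs J | bruhatLE cs w.1 y.1 ∧ bruhatLE cs y.1 z.1},
          (-1 : R) ^ (cs.length y.1 - cs.length w.1) * QJ w y * b.repr (CJ z) y)
          = if w = z then 1 else 0) ∧
      (∀ w y : minReps cs J, bruhatLE cs w.1 y.1 → K.InZq (QJ w y)) ∧
      (∀ w : minReps cs J, QJ w w = 1) ∧
      (∀ w y : minReps cs J, bruhatLE cs w.1 y.1 → w ≠ y →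
        ∃ p : Polynomial ℤ, Polynomial.aeval K.q p = QJ w y ∧
          2 * p.natDegree ≤ cs.length y.1 - cs.length w.1 - 1) ∧
      (∀ QJ' : minReps cs J → minReps cs J → R,
        (∀ w z : minReps cs J, bruhatLE cs w.1 z.1 →
          (∑ᶠ y ∈ {y : minReps cs J | bruhatLE cs w.1 y.1 ∧ bruhatLE cs y.1 z.1},
            (-1 : R) ^ (cs.length y.1 - cs.length w.1) * QJ' w y * b.repr (CJ z) y)
            = if w = z then 1 else 0) →
        ∀ w y : minReps cs J, bruhatLE cs w.1 y.1 → QJ' w y = QJ w y) := by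
  have haL : a ∈ K.laurent := by
    rcases ha with rfl | rfl
    exacts [K.q_mem_laurent, neg_mem (one_mem _)]
  have hP : IsUnitriangular (fun u : minReps cs J => cs.length u.1)
      (fun x y => bruhatLE cs x.1 y.1) fun z => b.repr (CJ z) :=
    ⟨fun z => (hCJ z).1, fun h => (hCJ _).2.1 _ h, fun h => h.eq_or_length_lt.imp_left Subtype.ext⟩
  have hsign (k : ℕ) (r : R) : (-1) ^ k * ((-1) ^ k * r) = r := by
    rw [← mul_assoc, ← mul_pow, neg_one_mul, neg_neg, one_pow, one_mul]
  have hQ {w y : minReps cs J} (hwy : bruhatLE cs w.1 y.1) :=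
    KLRing.mem_klPolys.1 <| KLRing.neg_one_pow_mul_mem_klPolys (cs.length y.1 - cs.length w.1) <|
      hP.triangularInv_mem (parabolicKL_mem_klPolys hInd haL hbar hb hbarJ hCJ) hwy
  refine ⟨fun w y => (-1) ^ (cs.length y.1 - cs.length w.1) * triangularInv _ _ _ w y,
    fun w z hwz => ?_, fun w y hwy => ?_, fun w => by simp [triangularInv_eq],
    fun w y hwy _ => hQ hwy, fun QJ' hQJ' w y hwy => ?_⟩
  · rw [hP.finsum_mem_interval_mul_eq_sum]
    simp only [hsign]
    exact hP.sum_triangularInv_mul hwz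
  · obtain ⟨p, hp, -⟩ := hQ hwy
    exact ⟨p, hp⟩
  · dsimp only
    rw [← hP.eq_triangularInv _
      (fun w z hwz => hP.finsum_mem_interval_mul_eq_sum _ w z ▸ hQJ' w z hwz) hwy, hsign]

end KLPaper
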